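/- arXiv:2307.02086 — 4 statements merged into one kernel-verified Lean document; each statement's English description precedes it below -/
import Mathlib

section
/- Let x = (x_1,x_2), y = (y_1,y_2), z = (z_1,z_2) ∈ [0,∞)² satisfy min{x_j, y_j, z_j} = 0 for j = 1, 2. Then |det C(x,y,z)| ≤ max{x_1,y_1,z_1} · max{x_2,y_2,z_2}, where C(x,y,z) is the 3×3 matrix with columns (1,x_1,x_2)^T, (1,y_1,y_2)^T, (1,z_1,z_2)^T. -/
open Matrix

/-- The 3×3 matrix with columns `(1,x₁,x₂)ᵀ, (1,y₁,y₂)ᵀ, (1,z₁,z₂)ᵀ`. -/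
noncomputable def matC (x y z : ℝ × ℝ) : Matrix (Fin 3) (Fin 3) ℝ :=
  !![1, 1, 1; x.1, y.1, z.1; x.2, y.2, z.2]

/-!
The triangle with vertices `x, y, z` lies in the box `[0, M₁] × [0, M₂]`, and a triangle in a
box has at most half its area. Concretely, after sorting the vertices by first coordinate,
`x₁ ≤ y₁ ≤ z₁`, the determinant is `(y₁ - x₁)(z₂ - y₂) - (z₁ - y₁)(y₂ - x₂)`, a combination of
two height differences bounded by `M₂` with nonnegative weights summing to `z₁ - x₁ ≤ M₁`.
-/

open Set

namespace MatC

theorem det_eq (x y z : ℝ × ℝ) :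
    (matC x y z).det = (y.1 - x.1) * (z.2 - y.2) - (z.1 - y.1) * (y.2 - x.2) := by
  simp only [matC, Matrix.det_fin_three, Matrix.of_apply, Matrix.cons_val', Matrix.cons_val_zero,
    Matrix.cons_val_one, Matrix.cons_val_two, Matrix.empty_val', Matrix.cons_val_fin_one,
    Matrix.head_cons, Matrix.tail_cons, Matrix.head_fin_const]
  ring

theorem det_swap_left (x y z : ℝ × ℝ) : (matC y x z).det = -(matC x y z).det := by
  simp only [det_eq]; ring

theorem det_swap_right (x y z : ℝ × ℝ) : (matC x z y).det = -(matC x y z).det := by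
  simp only [det_eq]; ring

theorem det_swap_outer (x y z : ℝ × ℝ) : (matC z y x).det = -(matC x y z).det := by
  simp only [det_eq]; ring

theorem abs_det_le_of_fst_le_of_fst_le {x y z : ℝ × ℝ} {h : ℝ}
    (hxy : x.1 ≤ y.1) (hyz : y.1 ≤ z.1) (hzy : |z.2 - y.2| ≤ h) (hyx : |y.2 - x.2| ≤ h) :
    |(matC x y z).det| ≤ (z.1 - x.1) * h :=
  calc |(matC x y z).det|
      ≤ |(y.1 - x.1) * (z.2 - y.2)| + |(z.1 - y.1) * (y.2 - x.2)| := by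
        rw [det_eq]; exact abs_sub _ _
    _ = (y.1 - x.1) * |z.2 - y.2| + (z.1 - y.1) * |y.2 - x.2| := by
        rw [abs_mul, abs_mul, abs_of_nonneg (sub_nonneg.2 hxy), abs_of_nonneg (sub_nonneg.2 hyz)]
    _ ≤ (y.1 - x.1) * h + (z.1 - y.1) * h := by gcongr
    _ = (z.1 - x.1) * h := by ring

theorem abs_det_le_of_mem_Icc {a₁ b₁ a₂ b₂ : ℝ} {x y z : ℝ × ℝ}
    (hx : x.1 ∈ Icc a₁ b₁ ∧ x.2 ∈ Icc a₂ b₂) (hy : y.1 ∈ Icc a₁ b₁ ∧ y.2 ∈ Icc a₂ b₂)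
    (hz : z.1 ∈ Icc a₁ b₁ ∧ z.2 ∈ Icc a₂ b₂) :
    |(matC x y z).det| ≤ (b₁ - a₁) * (b₂ - a₂) := by
  wlog hxy : x.1 ≤ y.1 generalizing x y
  · rw [← abs_neg, ← det_swap_left]
    exact this hy hx (not_le.1 hxy).le
  wlog hxz : x.1 ≤ z.1 generalizing x z
  · rw [← abs_neg, ← det_swap_outer]
    exact this hx hz ((not_le.1 hxz).le.trans hxy) (not_le.1 hxz).le
  wlog hyz : y.1 ≤ z.1 generalizing y z
  · rw [← abs_neg, ← det_swap_right]
    exact this hz hy hxz hxy (not_le.1 hyz).le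
  obtain ⟨⟨hx₁, -⟩, hx₂, hx₂'⟩ := hx
  obtain ⟨-, hy₂, hy₂'⟩ := hy
  obtain ⟨⟨-, hz₁⟩, hz₂, hz₂'⟩ := hz
  have hzy : |z.2 - y.2| ≤ b₂ - a₂ := abs_sub_le_iff.2 ⟨by linarith, by linarith⟩
  have hyx : |y.2 - x.2| ≤ b₂ - a₂ := abs_sub_le_iff.2 ⟨by linarith, by linarith⟩
  calc |(matC x y z).det| ≤ (z.1 - x.1) * (b₂ - a₂) :=
        abs_det_le_of_fst_le_of_fst_le hxy hyz hzy hyx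
    _ ≤ (b₁ - a₁) * (b₂ - a₂) := by gcongr; linarith

end MatC

theorem stmt11_general (x y z : ℝ × ℝ)
    (hx : 0 ≤ x.1 ∧ 0 ≤ x.2) (hy : 0 ≤ y.1 ∧ 0 ≤ y.2) (hz : 0 ≤ z.1 ∧ 0 ≤ z.2) :
    |(matC x y z).det| ≤ max x.1 (max y.1 z.1) * max x.2 (max y.2 z.2) := by
  simpa only [sub_zero] using MatC.abs_det_le_of_mem_Icc (a₁ := 0) (a₂ := 0)
    ⟨⟨hx.1, le_max_left _ _⟩, ⟨hx.2, le_max_left _ _⟩⟩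
    ⟨⟨hy.1, (le_max_left _ _).trans (le_max_right _ _)⟩,
      ⟨hy.2, (le_max_left _ _).trans (le_max_right _ _)⟩⟩
    ⟨⟨hz.1, (le_max_right _ _).trans (le_max_right _ _)⟩,
      ⟨hz.2, (le_max_right _ _).trans (le_max_right _ _)⟩⟩

/-- If `x, y, z ∈ [0,∞)²` with `min{x_j,y_j,z_j} = 0` for `j = 1,2`, then
`|det C(x,y,z)| ≤ max{x₁,y₁,z₁} · max{x₂,y₂,z₂}`. -/
theorem stmt11 (x y z : ℝ × ℝ)
    (hx : 0 ≤ x.1 ∧ 0 ≤ x.2) (hy : 0 ≤ y.1 ∧ 0 ≤ y.2) (hz : 0 ≤ z.1 ∧ 0 ≤ z.2)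
    (hmin1 : min x.1 (min y.1 z.1) = 0) (hmin2 : min x.2 (min y.2 z.2) = 0) :
    |(matC x y z).det| ≤ max x.1 (max y.1 z.1) * max x.2 (max y.2 z.2) :=
  stmt11_general x y z hx hy hz
end

section
/- Let c_1, c_2 > 0, c_j* = min{c_j, 2}, and Z = [0,c_1] × [0,c_2]. The function g_1(x,y,z) = exp(−(x_1+x_2+y_1+y_2+z_1+z_2)/2) · |det C(x,y,z)| over (x,y,z) ∈ Z³ (with C(x,y,z) the 3×3 matrix with columns (1,x_1,x_2)^T etc.) is maximized exactly at the triples whose components are {(0,0), (c_1*,0), (0,c_2*)} in some order, with maximum value exp(−(c_1*+c_2*)/2) c_1* c_2*. -/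
/-!
Write `Sⱼ` and `Mⱼ` for the sum and the maximum of the `j`-th coordinates of `x, y, z`.
The determinant is twice the signed area of a triangle in `[0, M₁] × [0, M₂]`, so
`|det C| ≤ M₁ M₂`, and the objective is at most the product of the factors
`e^{-Sⱼ/2} Mⱼ ≤ e^{-Mⱼ/2} Mⱼ`. By the tangent-line bound `1 + u ≤ eᵘ`, the function
`t ↦ t e^{-t/2}` attains its maximum over `[0, cⱼ]` only at `cⱼ* = min cⱼ 2`.
Equality therefore forces `Sⱼ = Mⱼ = cⱼ*`: in each coordinate exactly one of the three points
is nonzero, and since `det C ≠ 0` these two points are different.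
-/

open Matrix Real

theorem Multiset.triple_eq_triple_iff {α : Type*} {a b c p q r : α} :
    ({a, b, c} : Multiset α) = {p, q, r} ↔
      a = p ∧ b = q ∧ c = r ∨ a = q ∧ b = p ∧ c = r ∨ a = r ∧ b = q ∧ c = p ∨
        a = q ∧ b = r ∧ c = p ∨ a = r ∧ b = p ∧ c = q ∨ a = p ∧ b = r ∧ c = q := by
  have h : ({a, b, c} : Multiset α) = {p, q, r} ↔ [a, b, c] ∈ List.permutations [p, q, r] := by
    rw [List.mem_permutations, ← Multiset.coe_eq_coe]; rfl
  rw [h]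
  simp [List.permutations, List.permutationsAux, List.permutationsAux.rec]

theorem det_matC (x y z : ℝ × ℝ) :
    (matC x y z).det = x.1 * (y.2 - z.2) + y.1 * (z.2 - x.2) + z.1 * (x.2 - y.2) := by
  rw [matC, det_fin_three]
  simp only [of_apply, cons_val', cons_val_zero, cons_val_fin_one, cons_val_one, one_mul, cons_val]
  ring

theorem mul_le_mul_posPart {a P u : ℝ} (ha : 0 ≤ a) (haP : a ≤ P) : a * u ≤ P * u⁺ :=
  (mul_le_mul_of_nonneg_left (le_posPart u) ha).trans
    (mul_le_mul_of_nonneg_right haP (posPart_nonneg u))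

-- The left side is `max d e f - min d e f`.
theorem posPart_sub_add_posPart_sub_add_posPart_sub_le {d e f Q : ℝ} (hd : d ∈ Set.Icc 0 Q)
    (he : e ∈ Set.Icc 0 Q) (hf : f ∈ Set.Icc 0 Q) : (e - f)⁺ + (f - d)⁺ + (d - e)⁺ ≤ Q := by
  obtain ⟨hd0, hdQ⟩ := hd; obtain ⟨he0, heQ⟩ := he; obtain ⟨hf0, hfQ⟩ := hf
  simp only [posPart, max_def]
  split_ifs <;> linarith

theorem det_matC_le {P Q : ℝ} {x y z : ℝ × ℝ} (hx : x ∈ Set.Icc 0 P ×ˢ Set.Icc 0 Q)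
    (hy : y ∈ Set.Icc 0 P ×ˢ Set.Icc 0 Q) (hz : z ∈ Set.Icc 0 P ×ˢ Set.Icc 0 Q) :
    (matC x y z).det ≤ P * Q := by
  have hP : 0 ≤ P := hx.1.1.trans hx.1.2
  rw [det_matC]
  calc x.1 * (y.2 - z.2) + y.1 * (z.2 - x.2) + z.1 * (x.2 - y.2)
      ≤ P * (y.2 - z.2)⁺ + P * (z.2 - x.2)⁺ + P * (x.2 - y.2)⁺ :=
        add_le_add (add_le_add (mul_le_mul_posPart hx.1.1 hx.1.2)
          (mul_le_mul_posPart hy.1.1 hy.1.2)) (mul_le_mul_posPart hz.1.1 hz.1.2)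
    _ = P * ((y.2 - z.2)⁺ + (z.2 - x.2)⁺ + (x.2 - y.2)⁺) := by ring
    _ ≤ P * Q := mul_le_mul_of_nonneg_left
        (posPart_sub_add_posPart_sub_add_posPart_sub_le hx.2 hy.2 hz.2) hP

theorem abs_det_matC_le {P Q : ℝ} {x y z : ℝ × ℝ} (hx : x ∈ Set.Icc 0 P ×ˢ Set.Icc 0 Q)
    (hy : y ∈ Set.Icc 0 P ×ˢ Set.Icc 0 Q) (hz : z ∈ Set.Icc 0 P ×ˢ Set.Icc 0 Q) :
    |(matC x y z).det| ≤ P * Q := by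
  have hswap := det_matC_le hx hz hy
  rw [det_matC] at hswap
  rw [abs_le, det_matC]
  exact ⟨by linarith, (det_matC x y z) ▸ det_matC_le hx hy hz⟩

-- The condition on `t` says `t ≤ m`, unless `m = 2` is the peak of `t ↦ t e^{-t/2}`.
theorem exp_neg_half_mul_lt {t m : ℝ} (hm : 0 < m) (htm : (t - m) * (2 - m) ≤ 0) (ht : t ≠ m) :
    exp (-t / 2) * t < exp (-m / 2) * m := by
  have hlin : t ≤ m * ((t - m) / 2 + 1) := by nlinarith
  have hexp : (t - m) / 2 + 1 < exp ((t - m) / 2) :=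
    add_one_lt_exp (div_ne_zero (sub_ne_zero.2 ht) two_ne_zero)
  calc exp (-t / 2) * t < exp (-t / 2) * (m * exp ((t - m) / 2)) :=
        mul_lt_mul_of_pos_left (hlin.trans_lt (mul_lt_mul_of_pos_left hexp hm)) (exp_pos _)
    _ = exp (-m / 2) * m := by rw [mul_left_comm, ← exp_add]; ring_nf

theorem exp_neg_half_mul_lt_min {c t : ℝ} (hc : 0 < c) (htc : t ≤ c) (ht : t ≠ min c 2) :
    exp (-t / 2) * t < exp (-min c 2 / 2) * min c 2 := by
  refine exp_neg_half_mul_lt (lt_min hc two_pos) ?_ ht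
  rcases min_cases c 2 with ⟨h, hc2⟩ | ⟨h, -⟩ <;> rw [h]
  · exact mul_nonpos_of_nonpos_of_nonneg (by linarith) (by linarith)
  · simp

theorem exp_neg_half_mul_le_min {c t : ℝ} (hc : 0 < c) (htc : t ≤ c) :
    exp (-t / 2) * t ≤ exp (-min c 2 / 2) * min c 2 := by
  rcases eq_or_ne t (min c 2) with rfl | ht
  · rfl
  · exact (exp_neg_half_mul_lt_min hc htc ht).le

theorem exp_neg_half_mul_le_of_le {s t : ℝ} (ht : 0 ≤ t) (hts : t ≤ s) :
    exp (-s / 2) * t ≤ exp (-t / 2) * t := by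
  gcongr

theorem max_max_le_add_add {a b d : ℝ} (ha : 0 ≤ a) (hb : 0 ≤ b) (hd : 0 ≤ d) :
    max a (max b d) ≤ a + b + d :=
  max_le (by linarith) (max_le (by linarith) (by linarith))

theorem eq_of_add_add_eq_max {a b d m : ℝ} (ha : 0 ≤ a) (hb : 0 ≤ b) (hd : 0 ≤ d)
    (hsum : a + b + d = m) (hmax : max a (max b d) = m) :
    a = m ∧ b = 0 ∧ d = 0 ∨ a = 0 ∧ b = m ∧ d = 0 ∨ a = 0 ∧ b = 0 ∧ d = m := by
  rcases max_choice a (max b d) with h | h <;> rw [h] at hmax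
  · exact Or.inl ⟨by linarith, by linarith, by linarith⟩
  rcases max_choice b d with h' | h' <;> rw [h'] at hmax
  · exact Or.inr (Or.inl ⟨by linarith, by linarith, by linarith⟩)
  · exact Or.inr (Or.inr ⟨by linarith, by linarith, by linarith⟩)

theorem exp_neg_half_add_add_mul_max_le {c a b d : ℝ} (hc : 0 < c) (ha : a ∈ Set.Icc 0 c)
    (hb : b ∈ Set.Icc 0 c) (hd : d ∈ Set.Icc 0 c) :
    exp (-(a + b + d) / 2) * max a (max b d) ≤ exp (-min c 2 / 2) * min c 2 :=
  (exp_neg_half_mul_le_of_le (ha.1.trans (le_max_left _ _))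
    (max_max_le_add_add ha.1 hb.1 hd.1)).trans
    (exp_neg_half_mul_le_min hc (max_le ha.2 (max_le hb.2 hd.2)))

theorem eq_of_exp_neg_half_add_add_mul_max_eq {c a b d : ℝ} (hc : 0 < c)
    (ha : a ∈ Set.Icc 0 c) (hb : b ∈ Set.Icc 0 c) (hd : d ∈ Set.Icc 0 c)
    (h : exp (-(a + b + d) / 2) * max a (max b d) = exp (-min c 2 / 2) * min c 2) :
    a = min c 2 ∧ b = 0 ∧ d = 0 ∨ a = 0 ∧ b = min c 2 ∧ d = 0 ∨
      a = 0 ∧ b = 0 ∧ d = min c 2 := by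
  have hM0 : 0 ≤ max a (max b d) := ha.1.trans (le_max_left _ _)
  have hMS : max a (max b d) ≤ a + b + d := max_max_le_add_add ha.1 hb.1 hd.1
  have hMc : max a (max b d) ≤ c := max_le ha.2 (max_le hb.2 hd.2)
  have hMm : max a (max b d) = min c 2 := by
    by_contra hne
    exact h.not_lt ((exp_neg_half_mul_le_of_le hM0 hMS).trans_lt
      (exp_neg_half_mul_lt_min hc hMc hne))
  have hSm : a + b + d = min c 2 := by
    rw [hMm] at h
    have := exp_injective (mul_right_cancel₀ (lt_min hc two_pos).ne' h)
    linarith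
  exact eq_of_add_add_eq_max ha.1 hb.1 hd.1 hSm hMm

theorem exp_mul_abs_det_matC_le {x y z : ℝ × ℝ} (hx : 0 ≤ x) (hy : 0 ≤ y) (hz : 0 ≤ z) :
    exp (-(x.1 + x.2 + y.1 + y.2 + z.1 + z.2) / 2) * |(matC x y z).det| ≤
      exp (-(x.1 + y.1 + z.1) / 2) * max x.1 (max y.1 z.1) *
        (exp (-(x.2 + y.2 + z.2) / 2) * max x.2 (max y.2 z.2)) := by
  have hdet := abs_det_matC_le (x := x) (y := y) (z := z)
    (P := max x.1 (max y.1 z.1)) (Q := max x.2 (max y.2 z.2))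
    ⟨⟨hx.1, le_max_left _ _⟩, ⟨hx.2, le_max_left _ _⟩⟩
    ⟨⟨hy.1, (le_max_left _ _).trans (le_max_right _ _)⟩,
      ⟨hy.2, (le_max_left _ _).trans (le_max_right _ _)⟩⟩
    ⟨⟨hz.1, (le_max_right _ _).trans (le_max_right _ _)⟩,
      ⟨hz.2, (le_max_right _ _).trans (le_max_right _ _)⟩⟩
  calc _ ≤ exp (-(x.1 + x.2 + y.1 + y.2 + z.1 + z.2) / 2) *
        (max x.1 (max y.1 z.1) * max x.2 (max y.2 z.2)) := by gcongr
    _ = _ := by rw [mul_mul_mul_comm, ← exp_add]; ring_nf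

theorem multiset_eq_of_det_matC_ne_zero {m₁ m₂ : ℝ} {x y z : ℝ × ℝ}
    (h₁ : x.1 = m₁ ∧ y.1 = 0 ∧ z.1 = 0 ∨ x.1 = 0 ∧ y.1 = m₁ ∧ z.1 = 0 ∨
      x.1 = 0 ∧ y.1 = 0 ∧ z.1 = m₁)
    (h₂ : x.2 = m₂ ∧ y.2 = 0 ∧ z.2 = 0 ∨ x.2 = 0 ∧ y.2 = m₂ ∧ z.2 = 0 ∨
      x.2 = 0 ∧ y.2 = 0 ∧ z.2 = m₂)
    (hdet : (matC x y z).det ≠ 0) :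
    ({x, y, z} : Multiset (ℝ × ℝ)) = {(0, 0), (m₁, 0), (0, m₂)} := by
  obtain ⟨x₁, x₂⟩ := x
  obtain ⟨y₁, y₂⟩ := y
  obtain ⟨z₁, z₂⟩ := z
  rw [det_matC] at hdet
  rw [Multiset.triple_eq_triple_iff]
  rcases h₁ with ⟨rfl, rfl, rfl⟩ | ⟨rfl, rfl, rfl⟩ | ⟨rfl, rfl, rfl⟩ <;>
    rcases h₂ with ⟨rfl, rfl, rfl⟩ | ⟨rfl, rfl, rfl⟩ | ⟨rfl, rfl, rfl⟩ <;>
    simp_all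

/-- On `Z = [0,c₁] × [0,c₂]`, the function
`g₁(x,y,z) = exp(−(x₁+x₂+y₁+y₂+z₁+z₂)/2)·|det C(x,y,z)|` is maximized exactly at the
triples whose components are `(0,0)`, `(c₁*,0)`, `(0,c₂*)` in some order (where
`c_j* = min{c_j,2}`), with maximum value `exp(−(c₁*+c₂*)/2) c₁* c₂*`. -/
theorem stmt13 (c₁ c₂ : ℝ) (hc₁ : 0 < c₁) (hc₂ : 0 < c₂)
    (x y z : ℝ × ℝ)
    (hx : x ∈ Set.Icc 0 c₁ ×ˢ Set.Icc 0 c₂) (hy : y ∈ Set.Icc 0 c₁ ×ˢ Set.Icc 0 c₂)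
    (hz : z ∈ Set.Icc 0 c₁ ×ˢ Set.Icc 0 c₂) :
    Real.exp (-(x.1 + x.2 + y.1 + y.2 + z.1 + z.2) / 2) * |(matC x y z).det|
      ≤ Real.exp (-(min c₁ 2 + min c₂ 2) / 2) * (min c₁ 2 * min c₂ 2)
    ∧ (Real.exp (-(x.1 + x.2 + y.1 + y.2 + z.1 + z.2) / 2) * |(matC x y z).det|
        = Real.exp (-(min c₁ 2 + min c₂ 2) / 2) * (min c₁ 2 * min c₂ 2)
      ↔ ({x, y, z} : Multiset (ℝ × ℝ))
          = {((0 : ℝ), (0 : ℝ)), (min c₁ 2, 0), (0, min c₂ 2)}) := by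
  have hm₁ : 0 < min c₁ 2 := lt_min hc₁ two_pos
  have hm₂ : 0 < min c₂ 2 := lt_min hc₂ two_pos
  have hrhs : exp (-(min c₁ 2 + min c₂ 2) / 2) * (min c₁ 2 * min c₂ 2) =
      exp (-min c₁ 2 / 2) * min c₁ 2 * (exp (-min c₂ 2 / 2) * min c₂ 2) := by
    rw [mul_mul_mul_comm, ← exp_add]; ring_nf
  have hdet := exp_mul_abs_det_matC_le ⟨hx.1.1, hx.2.1⟩ ⟨hy.1.1, hy.2.1⟩ ⟨hz.1.1, hz.2.1⟩
  have h₁ := exp_neg_half_add_add_mul_max_le hc₁ hx.1 hy.1 hz.1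
  have h₂ := exp_neg_half_add_add_mul_max_le hc₂ hx.2 hy.2 hz.2
  have hA₁ : 0 ≤ exp (-(x.1 + y.1 + z.1) / 2) * max x.1 (max y.1 z.1) :=
    mul_nonneg (exp_pos _).le (hx.1.1.trans (le_max_left _ _))
  have hA₂ : 0 ≤ exp (-(x.2 + y.2 + z.2) / 2) * max x.2 (max y.2 z.2) :=
    mul_nonneg (exp_pos _).le (hx.2.1.trans (le_max_left _ _))
  have hprod := mul_le_mul h₁ h₂ hA₂ (by positivity)
  refine ⟨hrhs ▸ hdet.trans hprod, fun heq => ?_, fun hms => ?_⟩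
  · have hpos : 0 < exp (-(min c₁ 2 + min c₂ 2) / 2) * (min c₁ 2 * min c₂ 2) := by positivity
    have hprod_ge := hrhs ▸ heq ▸ hdet
    have hfac := (mul_eq_mul_iff_eq_and_eq_of_pos' h₁ h₂ (by positivity)
      (pos_of_mul_pos_right ((hrhs ▸ hpos).trans_le hprod_ge) hA₁)).1 (le_antisymm hprod hprod_ge)
    refine multiset_eq_of_det_matC_ne_zero
      (eq_of_exp_neg_half_add_add_mul_max_eq hc₁ hx.1 hy.1 hz.1 hfac.1)
      (eq_of_exp_neg_half_add_add_mul_max_eq hc₂ hx.2 hy.2 hz.2 hfac.2) fun h0 => ?_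
    rw [h0, abs_zero, mul_zero] at heq
    exact hpos.ne heq
  · rw [Multiset.triple_eq_triple_iff] at hms
    rcases hms with ⟨rfl, rfl, rfl⟩ | ⟨rfl, rfl, rfl⟩ | ⟨rfl, rfl, rfl⟩ | ⟨rfl, rfl, rfl⟩ |
      ⟨rfl, rfl, rfl⟩ | ⟨rfl, rfl, rfl⟩ <;>
    · simp [det_matC, abs_of_pos hm₁, abs_of_pos hm₂, add_comm]
end

section
/- Let c_1, c_2 > 0 and Z = [0,c_1] × [0,c_2]. The maximizers of g_3(x,y,z) = |det C(x,y,z)| over (x,y,z) ∈ Z³ are exactly the triples consisting of two adjacent vertices of the rectangle Z together with an arbitrary point on the edge of Z opposite to the edge joining those two vertices; the maximum value is c_1 c_2. -/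
/-!
Write `D(x, y, z)` for twice the signed area of the triangle `xyz`, so `det C = D`. `D` is
invariant under cyclic permutations and changes sign under a transposition, so it suffices to
bound `D` from above when `x` is a lowest vertex. Splitting according to whether `y` and `z` lie
to the left or to the right of `x`, either `D ≤ 0` or `c₁ c₂ - D` is a sum of three products of
nonnegative factors read off from the rectangle; equality forces every product to vanish, which
pins the vertices down to one of the four families.
-/

open Matrix

def doubleSignedArea (x y z : ℝ × ℝ) : ℝ :=
  (y.1 - x.1) * (z.2 - x.2) - (z.1 - x.1) * (y.2 - x.2)

theorem det_matC_s14 (x y z : ℝ × ℝ) : (matC x y z).det = doubleSignedArea x y z := by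
  rw [matC, det_fin_three, doubleSignedArea]
  simp only [of_apply, cons_val', cons_val_zero, cons_val_fin_one, cons_val_one, one_mul, cons_val]
  ring

theorem doubleSignedArea_rotate (x y z : ℝ × ℝ) :
    doubleSignedArea y z x = doubleSignedArea x y z := by
  unfold doubleSignedArea; ring

theorem doubleSignedArea_swap (x y z : ℝ × ℝ) :
    doubleSignedArea x z y = -doubleSignedArea x y z := by
  unfold doubleSignedArea; ring

namespace Multiset

variable {α : Type*}

theorem triple_rotate (a b c : α) : ({b, c, a} : Multiset α) = {a, b, c} := by
  simp only [insert_eq_cons, ← singleton_add]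
  abel

theorem triple_swap (a b c : α) : ({a, c, b} : Multiset α) = {a, b, c} := by
  simp only [insert_eq_cons, ← singleton_add]
  abel

theorem triple_eq_triple {x y z a b c : α} (h : ({x, y, z} : Multiset α) = {a, b, c}) :
    (x = a ∧ y = b ∧ z = c) ∨ (x = a ∧ y = c ∧ z = b) ∨ (x = b ∧ y = a ∧ z = c) ∨
      (x = b ∧ y = c ∧ z = a) ∨ (x = c ∧ y = a ∧ z = b) ∨ (x = c ∧ y = b ∧ z = a) := by
  simp only [insert_eq_cons, cons_eq_cons, singleton_eq_cons_iff] at h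
  aesop

end Multiset

theorem abs_doubleSignedArea_congr {x y z a b c : ℝ × ℝ}
    (h : ({x, y, z} : Multiset (ℝ × ℝ)) = {a, b, c}) :
    |doubleSignedArea x y z| = |doubleSignedArea a b c| := by
  rw [abs_eq_abs]
  rcases Multiset.triple_eq_triple h with
    ⟨rfl, rfl, rfl⟩ | ⟨rfl, rfl, rfl⟩ | ⟨rfl, rfl, rfl⟩ | ⟨rfl, rfl, rfl⟩ | ⟨rfl, rfl, rfl⟩ |
      ⟨rfl, rfl, rfl⟩ <;>
    unfold doubleSignedArea <;> first | (left; ring1) | (right; ring1)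

def IsMaxTriangle (c₁ c₂ : ℝ) (s : Multiset (ℝ × ℝ)) : Prop :=
  (∃ α ∈ Set.Icc (0 : ℝ) c₁, s = {((0 : ℝ), (0 : ℝ)), (c₁, 0), (α, c₂)})
  ∨ (∃ β ∈ Set.Icc (0 : ℝ) c₂, s = {((0 : ℝ), (0 : ℝ)), (c₁, β), (0, c₂)})
  ∨ (∃ β ∈ Set.Icc (0 : ℝ) c₂, s = {((0 : ℝ), β), (c₁, 0), (c₁, c₂)})
  ∨ (∃ α ∈ Set.Icc (0 : ℝ) c₁, s = {(α, (0 : ℝ)), (0, c₂), (c₁, c₂)})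

theorem abs_doubleSignedArea_of_isMaxTriangle {c₁ c₂ : ℝ} {x y z : ℝ × ℝ}
    (h : IsMaxTriangle c₁ c₂ {x, y, z}) : |doubleSignedArea x y z| = |c₁ * c₂| := by
  rcases h with ⟨α, -, h⟩ | ⟨β, -, h⟩ | ⟨β, -, h⟩ | ⟨α, -, h⟩ <;>
    rw [abs_doubleSignedArea_congr h, abs_eq_abs] <;> unfold doubleSignedArea <;> dsimp only <;>
    first | (left; ring1) | (right; ring1)

theorem doubleSignedArea_nonpos {x y z : ℝ × ℝ} (hxy : x.2 ≤ y.2) (hxz : x.2 ≤ z.2)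
    (hyx₁ : y.1 ≤ x.1) (hxz₁ : x.1 ≤ z.1) : doubleSignedArea x y z ≤ 0 := by
  unfold doubleSignedArea
  nlinarith [mul_nonneg (sub_nonneg.2 hyx₁) (sub_nonneg.2 hxz),
    mul_nonneg (sub_nonneg.2 hxz₁) (sub_nonneg.2 hxy)]

section LowestVertex

variable {c₁ c₂ : ℝ} {x y z : ℝ × ℝ}

theorem doubleSignedArea_le_of_lowest_of_le_of_le (hc₁ : 0 < c₁) (hc₂ : 0 < c₂)
    (hx : x ∈ Set.Icc 0 c₁ ×ˢ Set.Icc 0 c₂) (hy : y ∈ Set.Icc 0 c₁ ×ˢ Set.Icc 0 c₂)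
    (hz : z ∈ Set.Icc 0 c₁ ×ˢ Set.Icc 0 c₂) (hxy : x.2 ≤ y.2) (hxz : x.2 ≤ z.2)
    (hxy₁ : x.1 ≤ y.1) (hxz₁ : x.1 ≤ z.1) :
    doubleSignedArea x y z ≤ c₁ * c₂ ∧
      (doubleSignedArea x y z = c₁ * c₂ → IsMaxTriangle c₁ c₂ {x, y, z}) := by
  obtain ⟨x₁, x₂⟩ := x; obtain ⟨y₁, y₂⟩ := y; obtain ⟨z₁, z₂⟩ := z
  simp only [Set.mem_prod, Set.mem_Icc] at hx hy hz hxy hxz hxy₁ hxz₁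
  have gap : c₁ * c₂ - doubleSignedArea (x₁, x₂) (y₁, y₂) (z₁, z₂) =
      (z₁ - x₁) * (y₂ - x₂) + (c₁ - (y₁ - x₁)) * (z₂ - x₂) + c₁ * (c₂ - (z₂ - x₂)) := by
    unfold doubleSignedArea; ring
  have h₁ : 0 ≤ (z₁ - x₁) * (y₂ - x₂) := mul_nonneg (by linarith) (by linarith)
  have h₂ : 0 ≤ (c₁ - (y₁ - x₁)) * (z₂ - x₂) := mul_nonneg (by linarith) (by linarith)
  have h₃ : 0 ≤ c₁ * (c₂ - (z₂ - x₂)) := mul_nonneg hc₁.le (by linarith)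
  refine ⟨by linarith, fun hD => ?_⟩
  have e₁ : (z₁ - x₁) * (y₂ - x₂) = 0 := by linarith
  have e₂ : (c₁ - (y₁ - x₁)) * (z₂ - x₂) = 0 := by linarith
  have e₃ : c₁ * (c₂ - (z₂ - x₂)) = 0 := by linarith
  have hz₂ : z₂ - x₂ = c₂ := by linarith [(mul_eq_zero.1 e₃).resolve_left hc₁.ne']
  have hy₁ : y₁ - x₁ = c₁ := by
    linarith [(mul_eq_zero.1 e₂).resolve_right (by rw [hz₂]; exact hc₂.ne')]
  have hx₁ : x₁ = 0 := by linarith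
  have hx₂ : x₂ = 0 := by linarith
  have hy₁' : y₁ = c₁ := by linarith
  have hz₂' : z₂ = c₂ := by linarith
  subst x₁ x₂ y₁ z₂
  rcases mul_eq_zero.1 e₁ with h | h
  · obtain rfl : z₁ = 0 := by linarith
    exact Or.inr (Or.inl ⟨y₂, hy.2, rfl⟩)
  · obtain rfl : y₂ = 0 := by linarith
    exact Or.inl ⟨z₁, hz.1, rfl⟩

theorem doubleSignedArea_le_of_lowest_of_le_of_lt (hc₁ : 0 < c₁) (hc₂ : 0 < c₂)
    (hx : x ∈ Set.Icc 0 c₁ ×ˢ Set.Icc 0 c₂) (hy : y ∈ Set.Icc 0 c₁ ×ˢ Set.Icc 0 c₂)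
    (hz : z ∈ Set.Icc 0 c₁ ×ˢ Set.Icc 0 c₂) (hxy : x.2 ≤ y.2) (hxz : x.2 ≤ z.2)
    (hxy₁ : x.1 ≤ y.1) (hzx₁ : z.1 < x.1) :
    doubleSignedArea x y z ≤ c₁ * c₂ ∧
      (doubleSignedArea x y z = c₁ * c₂ → IsMaxTriangle c₁ c₂ {x, y, z}) := by
  obtain ⟨x₁, x₂⟩ := x; obtain ⟨y₁, y₂⟩ := y; obtain ⟨z₁, z₂⟩ := z
  simp only [Set.mem_prod, Set.mem_Icc] at hx hy hz hxy hxz hxy₁ hzx₁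
  have gap : c₁ * c₂ - doubleSignedArea (x₁, x₂) (y₁, y₂) (z₁, z₂) =
      (y₁ - x₁) * (c₂ - (z₂ - x₂)) + (x₁ - z₁) * (c₂ - (y₂ - x₂)) + (c₁ - (y₁ - z₁)) * c₂ := by
    unfold doubleSignedArea; ring
  have h₁ : 0 ≤ (y₁ - x₁) * (c₂ - (z₂ - x₂)) := mul_nonneg (by linarith) (by linarith)
  have h₂ : 0 ≤ (x₁ - z₁) * (c₂ - (y₂ - x₂)) := mul_nonneg (by linarith) (by linarith)
  have h₃ : 0 ≤ (c₁ - (y₁ - z₁)) * c₂ := mul_nonneg (by linarith) hc₂.le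
  refine ⟨by linarith, fun hD => ?_⟩
  have e₁ : (y₁ - x₁) * (c₂ - (z₂ - x₂)) = 0 := by linarith
  have e₂ : (x₁ - z₁) * (c₂ - (y₂ - x₂)) = 0 := by linarith
  have e₃ : (c₁ - (y₁ - z₁)) * c₂ = 0 := by linarith
  have hyz₁ : y₁ - z₁ = c₁ := by linarith [(mul_eq_zero.1 e₃).resolve_right hc₂.ne']
  have hy₂ : y₂ - x₂ = c₂ := by linarith [(mul_eq_zero.1 e₂).resolve_left (by linarith)]
  have hx₂ : x₂ = 0 := by linarith
  have hy₁ : y₁ = c₁ := by linarith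
  have hy₂' : y₂ = c₂ := by linarith
  have hz₁ : z₁ = 0 := by linarith
  subst x₂ y₁ y₂ z₁
  rcases mul_eq_zero.1 e₁ with h | h
  · obtain rfl : x₁ = c₁ := by linarith
    exact Or.inr (Or.inr (Or.inl ⟨z₂, hz.2, Multiset.triple_rotate _ _ _⟩))
  · obtain rfl : z₂ = c₂ := by linarith
    exact Or.inr (Or.inr (Or.inr ⟨x₁, hx.1, Multiset.triple_swap _ _ _⟩))

theorem doubleSignedArea_le_of_lowest_of_lt_of_lt (hc₁ : 0 < c₁) (hc₂ : 0 < c₂)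
    (hx : x ∈ Set.Icc 0 c₁ ×ˢ Set.Icc 0 c₂) (hy : y ∈ Set.Icc 0 c₁ ×ˢ Set.Icc 0 c₂)
    (hz : z ∈ Set.Icc 0 c₁ ×ˢ Set.Icc 0 c₂) (hxy : x.2 ≤ y.2) (hxz : x.2 ≤ z.2)
    (hyx₁ : y.1 < x.1) (hzx₁ : z.1 < x.1) :
    doubleSignedArea x y z ≤ c₁ * c₂ ∧
      (doubleSignedArea x y z = c₁ * c₂ → IsMaxTriangle c₁ c₂ {x, y, z}) := by
  obtain ⟨x₁, x₂⟩ := x; obtain ⟨y₁, y₂⟩ := y; obtain ⟨z₁, z₂⟩ := z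
  simp only [Set.mem_prod, Set.mem_Icc] at hx hy hz hxy hxz hyx₁ hzx₁
  have gap : c₁ * c₂ - doubleSignedArea (x₁, x₂) (y₁, y₂) (z₁, z₂) =
      (x₁ - y₁) * (z₂ - x₂) + (c₁ + (z₁ - x₁)) * (y₂ - x₂) + c₁ * (c₂ - (y₂ - x₂)) := by
    unfold doubleSignedArea; ring
  have h₁ : 0 ≤ (x₁ - y₁) * (z₂ - x₂) := mul_nonneg (by linarith) (by linarith)
  have h₂ : 0 ≤ (c₁ + (z₁ - x₁)) * (y₂ - x₂) := mul_nonneg (by linarith) (by linarith)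
  have h₃ : 0 ≤ c₁ * (c₂ - (y₂ - x₂)) := mul_nonneg hc₁.le (by linarith)
  refine ⟨by linarith, fun hD => ?_⟩
  have e₁ : (x₁ - y₁) * (z₂ - x₂) = 0 := by linarith
  have e₂ : (c₁ + (z₁ - x₁)) * (y₂ - x₂) = 0 := by linarith
  have e₃ : c₁ * (c₂ - (y₂ - x₂)) = 0 := by linarith
  have hy₂ : y₂ - x₂ = c₂ := by linarith [(mul_eq_zero.1 e₃).resolve_left hc₁.ne']
  have hzx : z₁ - x₁ = -c₁ := by
    linarith [(mul_eq_zero.1 e₂).resolve_right (by rw [hy₂]; exact hc₂.ne')]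
  have hz₂ : z₂ = x₂ := by linarith [(mul_eq_zero.1 e₁).resolve_left (by linarith)]
  have hx₁ : x₁ = c₁ := by linarith
  have hx₂ : x₂ = 0 := by linarith
  have hy₂' : y₂ = c₂ := by linarith
  have hz₁ : z₁ = 0 := by linarith
  subst z₂ x₁ x₂ y₂ z₁
  exact Or.inl ⟨y₁, hy.1, Multiset.triple_rotate _ _ _⟩

theorem doubleSignedArea_le_of_lowest (hc₁ : 0 < c₁) (hc₂ : 0 < c₂)
    (hx : x ∈ Set.Icc 0 c₁ ×ˢ Set.Icc 0 c₂) (hy : y ∈ Set.Icc 0 c₁ ×ˢ Set.Icc 0 c₂)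
    (hz : z ∈ Set.Icc 0 c₁ ×ˢ Set.Icc 0 c₂) (hxy : x.2 ≤ y.2) (hxz : x.2 ≤ z.2) :
    doubleSignedArea x y z ≤ c₁ * c₂ ∧
      (doubleSignedArea x y z = c₁ * c₂ → IsMaxTriangle c₁ c₂ {x, y, z}) := by
  rcases le_or_gt x.1 y.1 with hxy₁ | hyx₁ <;> rcases le_or_gt x.1 z.1 with hxz₁ | hzx₁
  · exact doubleSignedArea_le_of_lowest_of_le_of_le hc₁ hc₂ hx hy hz hxy hxz hxy₁ hxz₁
  · exact doubleSignedArea_le_of_lowest_of_le_of_lt hc₁ hc₂ hx hy hz hxy hxz hxy₁ hzx₁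
  · have hD := doubleSignedArea_nonpos hxy hxz hyx₁.le hxz₁
    have hc := mul_pos hc₁ hc₂
    exact ⟨by linarith, fun h => absurd h (by linarith)⟩
  · exact doubleSignedArea_le_of_lowest_of_lt_of_lt hc₁ hc₂ hx hy hz hxy hxz hyx₁ hzx₁

end LowestVertex

theorem doubleSignedArea_le {c₁ c₂ : ℝ} {x y z : ℝ × ℝ} (hc₁ : 0 < c₁) (hc₂ : 0 < c₂)
    (hx : x ∈ Set.Icc 0 c₁ ×ˢ Set.Icc 0 c₂) (hy : y ∈ Set.Icc 0 c₁ ×ˢ Set.Icc 0 c₂)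
    (hz : z ∈ Set.Icc 0 c₁ ×ˢ Set.Icc 0 c₂) :
    doubleSignedArea x y z ≤ c₁ * c₂ ∧
      (doubleSignedArea x y z = c₁ * c₂ → IsMaxTriangle c₁ c₂ {x, y, z}) := by
  have lowest : (x.2 ≤ y.2 ∧ x.2 ≤ z.2) ∨ (y.2 ≤ z.2 ∧ y.2 ≤ x.2) ∨ (z.2 ≤ x.2 ∧ z.2 ≤ y.2) := by
    grind
  rcases lowest with ⟨hxy, hxz⟩ | ⟨hyz, hyx⟩ | ⟨hzx, hzy⟩
  · exact doubleSignedArea_le_of_lowest hc₁ hc₂ hx hy hz hxy hxz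
  · rw [← doubleSignedArea_rotate x y z, ← Multiset.triple_rotate x y z]
    exact doubleSignedArea_le_of_lowest hc₁ hc₂ hy hz hx hyz hyx
  · rw [← doubleSignedArea_rotate x y z, ← doubleSignedArea_rotate y z x,
      ← Multiset.triple_rotate x y z, ← Multiset.triple_rotate y z x]
    exact doubleSignedArea_le_of_lowest hc₁ hc₂ hz hx hy hzx hzy

/-- On the rectangle `Z = [0,c₁] × [0,c₂]`, the maximum of
`g₃(x,y,z) = |det C(x,y,z)|` over `Z³` is `c₁ c₂`, attained exactly at the triples
consisting of two adjacent vertices of the rectangle together with an arbitrary point on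
the opposite edge. -/
theorem stmt14 (c₁ c₂ : ℝ) (hc₁ : 0 < c₁) (hc₂ : 0 < c₂)
    (x y z : ℝ × ℝ)
    (hx : x ∈ Set.Icc 0 c₁ ×ˢ Set.Icc 0 c₂) (hy : y ∈ Set.Icc 0 c₁ ×ˢ Set.Icc 0 c₂)
    (hz : z ∈ Set.Icc 0 c₁ ×ˢ Set.Icc 0 c₂) :
    |(matC x y z).det| ≤ c₁ * c₂
    ∧ (|(matC x y z).det| = c₁ * c₂ ↔
        (∃ α ∈ Set.Icc (0 : ℝ) c₁,
          ({x, y, z} : Multiset (ℝ × ℝ)) = {((0 : ℝ), (0 : ℝ)), (c₁, 0), (α, c₂)})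
        ∨ (∃ β ∈ Set.Icc (0 : ℝ) c₂,
          ({x, y, z} : Multiset (ℝ × ℝ)) = {((0 : ℝ), (0 : ℝ)), (c₁, β), (0, c₂)})
        ∨ (∃ β ∈ Set.Icc (0 : ℝ) c₂,
          ({x, y, z} : Multiset (ℝ × ℝ)) = {((0 : ℝ), β), (c₁, 0), (c₁, c₂)})
        ∨ (∃ α ∈ Set.Icc (0 : ℝ) c₁,
          ({x, y, z} : Multiset (ℝ × ℝ)) = {(α, (0 : ℝ)), (0, c₂), (c₁, c₂)})) := by
  have hc : 0 < c₁ * c₂ := mul_pos hc₁ hc₂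
  obtain ⟨hle, hmax⟩ := doubleSignedArea_le hc₁ hc₂ hx hy hz
  obtain ⟨hle', hmax'⟩ := doubleSignedArea_le hc₁ hc₂ hx hz hy
  rw [doubleSignedArea_swap] at hle' hmax'
  rw [Multiset.triple_swap] at hmax'
  rw [det_matC_s14]
  refine ⟨abs_le.2 ⟨by linarith, hle⟩, fun h => ?_, fun h => ?_⟩
  · rcases (abs_eq hc.le).1 h with h | h
    · exact hmax h
    · exact hmax' (by linarith)
  · rw [abs_doubleSignedArea_of_isMaxTriangle h, abs_of_pos hc]
end

section
/- Define h(t) = e^{−t} ((1 − t/2)² + (e²/4) t²) for t ≥ 0. Then h(t) ≤ 1 for all t ≥ 0, with equality precisely at t = 0 and t = 2. Moreover, h'(t) = −((1+e²)/4) e^{−t} (t² − 2·((3+e²)/(1+e²)) t + 8/(1+e²)), whose zeros are t_1 = 4/(1+e²) and t_2 = 2, and h is decreasing on [0,t_1], increasing on [t_1, 2], and decreasing on [2,∞). -/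
/-!
Writing `h(t) = e^{-t} q(t)` with `q(t) = (1 - t/2)² + (c/4) t²`, one has
`h' = -e^{-t} (q - q')`, and `q - q' = ((1 + c)/4) (t - 2) (t - 4/(1 + c))`.
For `c > 1` the root `4/(1 + c)` lies in `(0, 2)`, so `h` falls, rises, then falls again:
on `[0, ∞)` it stays below `max (h 0) (h 2)` except at `0` and `2`.
For `c = e²` both values are `1`, since `h 0 = 1` and `h 2 = c e^{-2}`.
-/

open Real Set

noncomputable def sensitivity (c t : ℝ) : ℝ :=
  exp (-t) * ((1 - t / 2) ^ 2 + c / 4 * t ^ 2)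

section

variable {c : ℝ}

lemma sq_sub_two_mul_add_eq_mul (hc : 1 + c ≠ 0) (t : ℝ) :
    t ^ 2 - 2 * ((3 + c) / (1 + c)) * t + 8 / (1 + c) = (t - 2) * (t - 4 / (1 + c)) := by
  field_simp
  ring

lemma hasDerivAt_sensitivity (hc : 1 + c ≠ 0) (t : ℝ) :
    HasDerivAt (sensitivity c)
      (-((1 + c) / 4) * exp (-t) * ((t - 2) * (t - 4 / (1 + c)))) t := by
  have hexp : HasDerivAt (fun t : ℝ => exp (-t)) (-exp (-t)) t := by
    simpa using (hasDerivAt_neg t).exp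
  have hquad : HasDerivAt (fun t : ℝ => (1 - t / 2) ^ 2 + c / 4 * t ^ 2)
      (2 * (1 - t / 2) ^ 1 * -(1 / 2) + c / 4 * (2 * t ^ 1 * 1)) t := by
    have hlin : HasDerivAt (fun t : ℝ => 1 - t / 2) (-(1 / 2)) t := by
      simpa using ((hasDerivAt_id t).div_const 2).const_sub 1
    exact (hlin.pow 2).add (((hasDerivAt_id t).pow 2).const_mul _)
  refine (hexp.mul hquad : HasDerivAt (sensitivity c) _ t).congr_deriv ?_
  field_simp
  ring

lemma deriv_sensitivity (hc : 1 + c ≠ 0) (t : ℝ) :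
    deriv (sensitivity c) t = -((1 + c) / 4) * exp (-t) * ((t - 2) * (t - 4 / (1 + c))) :=
  (hasDerivAt_sensitivity hc t).deriv

lemma deriv_sensitivity_eq_zero_iff (hc : 1 + c ≠ 0) (t : ℝ) :
    deriv (sensitivity c) t = 0 ↔ t = 4 / (1 + c) ∨ t = 2 := by
  have hlead : -((1 + c) / 4) * exp (-t) ≠ 0 :=
    mul_ne_zero (neg_ne_zero.mpr (div_ne_zero hc four_ne_zero)) (exp_pos _).ne'
  rw [deriv_sensitivity hc, mul_eq_zero, or_iff_right hlead, mul_eq_zero, sub_eq_zero, sub_eq_zero,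
    or_comm]

lemma deriv_sensitivity_neg_iff (hc : 0 < 1 + c) (t : ℝ) :
    deriv (sensitivity c) t < 0 ↔ 0 < (t - 2) * (t - 4 / (1 + c)) := by
  rw [deriv_sensitivity hc.ne', neg_mul, neg_mul, neg_lt_zero]
  exact mul_pos_iff_of_pos_left (by positivity)

lemma deriv_sensitivity_pos_iff (hc : 0 < 1 + c) (t : ℝ) :
    0 < deriv (sensitivity c) t ↔ (t - 2) * (t - 4 / (1 + c)) < 0 := by
  rw [deriv_sensitivity hc.ne', neg_mul, neg_mul, neg_pos]
  simpa using mul_lt_mul_iff_right₀ (c := 0) (by positivity : 0 < (1 + c) / 4 * exp (-t))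

lemma continuous_sensitivity : Continuous (sensitivity c) := by
  unfold sensitivity
  fun_prop

variable (hc : 1 < c)
include hc

lemma four_div_one_add_lt_two : 4 / (1 + c) < 2 := by
  rw [div_lt_iff₀ (by linarith)]
  linarith

lemma strictAntiOn_sensitivity_Iic : StrictAntiOn (sensitivity c) (Iic (4 / (1 + c))) := by
  refine strictAntiOn_of_deriv_neg (convex_Iic _) continuous_sensitivity.continuousOn
    fun t ht => (deriv_sensitivity_neg_iff (by linarith) t).mpr ?_
  rw [interior_Iic] at ht
  exact mul_pos_of_neg_of_neg (by linarith [four_div_one_add_lt_two hc, ht.out])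
    (by linarith [ht.out])

lemma strictMonoOn_sensitivity_Icc : StrictMonoOn (sensitivity c) (Icc (4 / (1 + c)) 2) := by
  refine strictMonoOn_of_deriv_pos (convex_Icc _ _) continuous_sensitivity.continuousOn
    fun t ht => (deriv_sensitivity_pos_iff (by linarith) t).mpr ?_
  rw [interior_Icc] at ht
  exact mul_neg_of_neg_of_pos (by linarith [ht.2]) (by linarith [ht.1])

lemma strictAntiOn_sensitivity_Ici : StrictAntiOn (sensitivity c) (Ici 2) := by
  refine strictAntiOn_of_deriv_neg (convex_Ici _) continuous_sensitivity.continuousOn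
    fun t ht => (deriv_sensitivity_neg_iff (by linarith) t).mpr ?_
  rw [interior_Ici] at ht
  exact mul_pos (by linarith [ht.out]) (by linarith [four_div_one_add_lt_two hc, ht.out])

lemma sensitivity_lt_max {t : ℝ} (ht : 0 < t) (ht2 : t ≠ 2) :
    sensitivity c t < max (sensitivity c 0) (sensitivity c 2) := by
  have ht₁ := four_div_one_add_lt_two hc
  rcases le_or_gt t (4 / (1 + c)) with hle | hgt
  · have h0 : (0 : ℝ) ≤ 4 / (1 + c) := div_nonneg zero_le_four (by linarith)
    exact lt_max_of_lt_left <| strictAntiOn_sensitivity_Iic hc h0 hle ht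
  rcases ht2.lt_or_gt with hlt | hgt2
  · exact lt_max_of_lt_right <|
      strictMonoOn_sensitivity_Icc hc ⟨hgt.le, hlt.le⟩ ⟨ht₁.le, le_rfl⟩ hlt
  · exact lt_max_of_lt_right <| strictAntiOn_sensitivity_Ici hc self_mem_Ici hgt2.le hgt2

end

lemma sensitivity_zero (c : ℝ) : sensitivity c 0 = 1 := by
  simp [sensitivity]

lemma sensitivity_two (c : ℝ) : sensitivity c 2 = exp (-2) * c := by
  norm_num [sensitivity]

lemma sensitivity_exp_one_sq_two : sensitivity (exp 1 ^ 2) 2 = 1 := by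
  rw [sensitivity_two, ← exp_nat_mul, ← exp_add]
  norm_num

lemma one_lt_exp_one_sq : 1 < exp 1 ^ 2 :=
  one_lt_pow₀ (one_lt_exp_iff.mpr one_pos) two_ne_zero

/-- For `h(t) = e^(−t)((1 − t/2)² + (e²/4)t²)`: `h(t) ≤ 1` for `t ≥ 0`, with
equality precisely at `t = 0` and `t = 2`; the derivative is
`h'(t) = −((1+e²)/4) e^(−t)(t² − 2((3+e²)/(1+e²))t + 8/(1+e²))`, with zeros
`t₁ = 4/(1+e²)` and `t₂ = 2`; and `h` decreases on `[0,t₁]`, increases on `[t₁,2]`, and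
decreases on `[2,∞)`. -/
theorem stmt15 :
    let h : ℝ → ℝ := fun t => Real.exp (-t) * ((1 - t / 2) ^ 2
      + Real.exp 1 ^ 2 / 4 * t ^ 2)
    let e2 : ℝ := Real.exp 1 ^ 2
    let t₁ : ℝ := 4 / (1 + e2)
    (∀ t : ℝ, 0 ≤ t → h t ≤ 1)
    ∧ (∀ t : ℝ, 0 ≤ t → (h t = 1 ↔ t = 0 ∨ t = 2))
    ∧ (∀ t : ℝ, deriv h t
        = -((1 + e2) / 4) * Real.exp (-t)
            * (t ^ 2 - 2 * ((3 + e2) / (1 + e2)) * t + 8 / (1 + e2)))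
    ∧ (∀ t : ℝ, deriv h t = 0 ↔ t = t₁ ∨ t = 2)
    ∧ AntitoneOn h (Icc 0 t₁) ∧ MonotoneOn h (Icc t₁ 2) ∧ AntitoneOn h (Ici 2) := by
  intro h e2 t₁
  have hh : h = sensitivity e2 := rfl
  have hc : 1 < e2 := one_lt_exp_one_sq
  have hc' : 1 + e2 ≠ 0 := by linarith
  have hmax : max (h 0) (h 2) = 1 := by
    rw [hh, sensitivity_zero, sensitivity_exp_one_sq_two, max_self]
  have hlt : ∀ t, 0 ≤ t → ¬(t = 0 ∨ t = 2) → h t < 1 := fun t ht ht02 =>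
    have ⟨ht0, ht2⟩ := not_or.mp ht02
    hmax ▸ sensitivity_lt_max hc (ht.lt_of_ne' ht0) ht2
  have hone : ∀ t, t = 0 ∨ t = 2 → h t = 1 := by
    rintro t (rfl | rfl)
    exacts [sensitivity_zero _, sensitivity_exp_one_sq_two]
  refine ⟨fun t ht => ?_, fun t ht => ⟨fun h1 => ?_, hone t⟩, fun t => ?_,
    deriv_sensitivity_eq_zero_iff hc', (strictAntiOn_sensitivity_Iic hc).antitoneOn.mono
    Icc_subset_Iic_self, (strictMonoOn_sensitivity_Icc hc).monotoneOn,
    (strictAntiOn_sensitivity_Ici hc).antitoneOn⟩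
  · by_cases h02 : t = 0 ∨ t = 2
    exacts [(hone t h02).le, (hlt t ht h02).le]
  · by_contra h02
    exact (hlt t ht h02).ne h1
  · rw [hh, deriv_sensitivity hc', sq_sub_two_mul_add_eq_mul hc']
end
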